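/- Let 0 ≤ s_1 ≤ ⋯ ≤ s_m be nonnegative integers, let T_0, …, T_{s_m−1} ∈ k(x)^{n×n}, and for 0 ≤ i ≤ s_m set T^{(i)} = T_0·T_1⋯T_{i−1} (with T^{(0)} = I). For any polynomial vectors u_1, …, u_m ∈ k[x]^n, the matrix K = [T^{(s_1)} u_1 | ⋯ | T^{(s_m)} u_m] ∈ k(x)^{n×m} satisfies: φ_ℓ(K) divides φ_ℓ(T_0)·φ_ℓ(T_1)⋯φ_ℓ(T_{s_m−1}) for all ℓ ≥ 0. -/

import Mathlib

open Polynomial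

noncomputable section

/-- Normalization on a field: every nonzero element normalizes to `1`. -/
noncomputable def fieldNormalizationMonoid (K : Type*) [Field K] : NormalizationMonoid K := by
  classical
  exact
  { normUnit := fun a => if h : a = 0 then 1 else (Units.mk0 a h)⁻¹
    normUnit_zero := dif_pos rfl
    normUnit_one := by
      rw [dif_neg one_ne_zero]
      exact Units.ext (by simp)
    normUnit_mul_units := fun {a} u ha => by
      rw [dif_neg (mul_ne_zero ha u.ne_zero), dif_neg ha]
      exact Units.ext (by
        simp only [Units.val_inv_eq_inv_val, Units.val_mk0, Units.val_mul]
        ring) }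

attribute [local instance] fieldNormalizationMonoid

noncomputable local instance (K : Type*) [Field K] : NormalizedGCDMonoid (Polynomial K) :=
  UniqueFactorizationMonoid.toNormalizedGCDMonoid _

variable {k : Type*} [Field k] [CharZero k]

/-- The ℓ-th determinantal denominator of a rational matrix: the monic least common
denominator of all minors of size at most ℓ. -/
def detDen {n p : ℕ} (R : Matrix (Fin n) (Fin p) (RatFunc k)) (ℓ : ℕ) : Polynomial k :=
  (Finset.range (ℓ + 1)).lcm fun i =>
    (Finset.univ : Finset ((Fin i ↪ Fin n) × (Fin i ↪ Fin p))).lcm fun fg =>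
      (Matrix.det fun a b => R (fg.1 a) (fg.2 b)).denom

/-! If every column of a minor of `K` has positive shift, the minor is `det (A * B)` with `A`
a set of rows of `T_0` and `B` the corresponding columns of the pseudo-Krylov matrix built from
`T_1, T_2, …` with all shifts lowered by one. Cauchy–Binet then bounds its denominator by
`φ_ℓ(T_0)` times the denominators of the maximal minors of `B`. A column with shift `0` is a
polynomial vector and is removed by Laplace expansion along it. Induction on the size of the minor
and on the largest shift concludes. -/

open Matrix

section CauchyBinet

variable {R : Type*} [CommRing R] {m n : Type*} [Fintype m] [DecidableEq m]

theorem Matrix.det_mul_eq_sum_fun [Fintype n] (A : Matrix m n R) (B : Matrix n m R) :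
    (A * B).det = ∑ f : m → n, (A.submatrix id f).det * ∏ i, B (f i) i := by
  simp only [det_apply', mul_apply, Finset.prod_univ_sum, Finset.mul_sum, Finset.sum_mul,
    Fintype.piFinset_univ, Finset.prod_mul_distrib, mul_assoc]
  rw [Finset.sum_comm]
  rfl

theorem Matrix.det_mul_eq_sum_embedding [Fintype n] [DecidableEq n] (A : Matrix m n R)
    (B : Matrix n m R) : (A * B).det = ∑ γ : m ↪ n, (A.submatrix id γ).det * ∏ i, B (γ i) i := by
  classical
  rw [det_mul_eq_sum_fun, ← Fintype.sum_subtype_add_sum_subtype Function.Injective,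
    ← (Equiv.subtypeInjectiveEquivEmbedding m n).sum_comp]
  refine (add_eq_left.2 (Finset.sum_eq_zero fun f _ => ?_)).trans rfl
  obtain ⟨i, j, hij, hne⟩ := Function.not_injective_iff.mp f.2
  rw [det_zero_of_column_eq hne (fun r => by simp [hij]), zero_mul]

theorem Matrix.det_submatrix_mul_det_submatrix (A : Matrix m n R) (B : Matrix n m R)
    (γ : m ↪ n) : (A.submatrix id γ).det * (B.submatrix γ id).det =
      ∑ σ : Equiv.Perm m, (A.submatrix id (γ ∘ σ)).det * ∏ i, B (γ (σ i)) i := by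
  rw [det_apply' (B.submatrix γ id), Finset.mul_sum]
  refine Finset.sum_congr rfl fun σ _ => ?_
  rw [show A.submatrix id (γ ∘ σ) = (A.submatrix id γ).submatrix id σ from rfl, det_permute']
  simp only [submatrix_apply, id]
  ring

/-- Cauchy–Binet, summed over injections rather than subsets. -/
theorem Matrix.card_factorial_smul_det_mul [Fintype n] [DecidableEq n] (A : Matrix m n R)
    (B : Matrix n m R) : (Fintype.card m).factorial • (A * B).det =
      ∑ γ : m ↪ n, (A.submatrix id γ).det * (B.submatrix γ id).det := by
  simp_rw [det_submatrix_mul_det_submatrix]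
  rw [Finset.sum_comm, ← Fintype.card_perm, ← Finset.card_univ, ← Finset.sum_const]
  refine Finset.sum_congr rfl fun σ _ => ?_
  rw [det_mul_eq_sum_embedding]
  exact ((Equiv.embeddingCongr σ.symm (Equiv.refl n)).sum_comp
    fun γ => (A.submatrix id γ).det * ∏ i, B (γ i) i).symm

end CauchyBinet

namespace RatFunc

variable {K : Type*} [Field K]

theorem denom_add_dvd_of_dvd {x y : RatFunc K} {d : K[X]} (hx : x.denom ∣ d)
    (hy : y.denom ∣ d) : (x + y).denom ∣ d := by
  rcases eq_or_ne d 0 with rfl | hd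
  · exact dvd_zero _
  obtain ⟨p, rfl⟩ := (denom_dvd hd).1 hx
  obtain ⟨q, rfl⟩ := (denom_dvd hd).1 hy
  exact (denom_dvd hd).2 ⟨p + q, by rw [map_add, add_div]⟩

theorem denom_sum_dvd {ι : Type*} (s : Finset ι) (f : ι → RatFunc K) {d : K[X]}
    (h : ∀ i ∈ s, (f i).denom ∣ d) : (∑ i ∈ s, f i).denom ∣ d :=
  Finset.sum_induction f (fun x => x.denom ∣ d) (fun _ _ => denom_add_dvd_of_dvd)
    (by rw [denom_zero]; exact one_dvd d) h

theorem denom_algebraMap_mul_dvd (p : K[X]) (x : RatFunc K) :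
    (algebraMap K[X] (RatFunc K) p * x).denom ∣ x.denom := by
  simpa only [denom_algebraMap, one_mul] using denom_mul_dvd (algebraMap K[X] (RatFunc K) p) x

theorem denom_dvd_denom_nsmul {m : ℕ} (hm : (m : K) ≠ 0) (x : RatFunc K) :
    x.denom ∣ (m • x).denom := by
  have hx : x = algebraMap K[X] (RatFunc K) (Polynomial.C (m : K)⁻¹) * (m • x) := by
    rw [nsmul_eq_mul, ← mul_assoc, ← map_natCast (algebraMap K[X] (RatFunc K)), ← map_mul,
      ← C_eq_natCast, ← C_mul, inv_mul_cancel₀ hm, C_1, map_one, one_mul]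
  conv_lhs => rw [hx]
  exact denom_algebraMap_mul_dvd _ _

end RatFunc

section Denominators

open RatFunc

variable {K : Type*} [Field K]

theorem Matrix.denom_det_succ_dvd_of_col_eq_algebraMap {t : ℕ}
    (M : Matrix (Fin (t + 1)) (Fin (t + 1)) (RatFunc K)) (j : Fin (t + 1))
    (p : Fin (t + 1) → K[X]) (hM : ∀ i, M i j = algebraMap K[X] (RatFunc K) (p i)) {d : K[X]}
    (h : ∀ i : Fin (t + 1), (M.submatrix i.succAbove j.succAbove).det.denom ∣ d) :
    M.det.denom ∣ d := by
  rw [det_succ_column M j]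
  refine denom_sum_dvd _ _ fun i _ => ?_
  rw [hM, ← map_one (algebraMap K[X] (RatFunc K)), ← map_neg, ← map_pow, ← map_mul]
  exact (denom_algebraMap_mul_dvd _ _).trans (h i)

theorem Matrix.denom_det_mul_dvd [CharZero K] {m n : Type*} [Fintype m] [DecidableEq m]
    [Fintype n] [DecidableEq n] (A : Matrix m n (RatFunc K)) (B : Matrix n m (RatFunc K))
    {d e : K[X]} (hA : ∀ γ : m ↪ n, (A.submatrix id γ).det.denom ∣ d)
    (hB : ∀ γ : m ↪ n, (B.submatrix γ id).det.denom ∣ e) : (A * B).det.denom ∣ d * e := by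
  -- the factorial of Cauchy–Binet is a unit of `K`, so it does not affect denominators
  refine (denom_dvd_denom_nsmul
    (Nat.cast_ne_zero.2 (Fintype.card m).factorial_ne_zero) _).trans ?_
  rw [card_factorial_smul_det_mul]
  exact denom_sum_dvd _ _ fun γ _ => (denom_mul_dvd _ _).trans (mul_dvd_mul (hA γ) (hB γ))

theorem detDen_dvd_iff {n p ℓ : ℕ} {R : Matrix (Fin n) (Fin p) (RatFunc K)} {d : K[X]} :
    detDen R ℓ ∣ d ↔ ∀ t ≤ ℓ, ∀ (α : Fin t ↪ Fin n) (γ : Fin t ↪ Fin p),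
      (R.submatrix α γ).det.denom ∣ d := by
  simp only [detDen, Finset.lcm_dvd_iff, Finset.mem_range, Nat.lt_succ_iff, Finset.mem_univ,
    true_implies, Prod.forall]
  rfl

theorem denom_det_submatrix_dvd_detDen {n p ℓ t : ℕ} (R : Matrix (Fin n) (Fin p) (RatFunc K))
    (ht : t ≤ ℓ) (α : Fin t → Fin n) (γ : Fin t → Fin p) :
    (R.submatrix α γ).det.denom ∣ detDen R ℓ := by
  by_cases hα : Function.Injective α
  · by_cases hγ : Function.Injective γ
    · exact detDen_dvd_iff.1 dvd_rfl t ht ⟨α, hα⟩ ⟨γ, hγ⟩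
    obtain ⟨i, j, hij, hne⟩ := Function.not_injective_iff.mp hγ
    rw [det_zero_of_column_eq hne fun r => by simp [hij], denom_zero]
    exact one_dvd _
  obtain ⟨i, j, hij, hne⟩ := Function.not_injective_iff.mp hα
  rw [det_zero_of_row_eq hne (funext fun r => by simp [hij]), denom_zero]
  exact one_dvd _

end Denominators

section PseudoKrylov

open RatFunc

variable {K : Type*} [Field K] {n : ℕ}

/-- The matrix `[T^{(σ j)} v_j]_j` with `T^{(i)} = T_0 ⋯ T_{i-1}`. -/
def pseudoKrylov {ι : Type*} (T : ℕ → Matrix (Fin n) (Fin n) (RatFunc K)) (σ : ι → ℕ)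
    (v : ι → Fin n → K[X]) : Matrix (Fin n) ι (RatFunc K) :=
  Matrix.of fun i j =>
    (((List.range (σ j)).map T).prod *ᵥ fun r => algebraMap K[X] (RatFunc K) (v j r)) i

theorem pseudoKrylov_apply_of_eq_zero {ι : Type*} (T : ℕ → Matrix (Fin n) (Fin n) (RatFunc K))
    {σ : ι → ℕ} (v : ι → Fin n → K[X]) (i : Fin n) {j : ι} (hj : σ j = 0) :
    pseudoKrylov T σ v i j = algebraMap K[X] (RatFunc K) (v j i) := by
  simp [pseudoKrylov, hj]

theorem pseudoKrylov_eq_mul_of_pos {ι : Type*} [Fintype ι]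
    (T : ℕ → Matrix (Fin n) (Fin n) (RatFunc K)) {σ : ι → ℕ} (hσ : ∀ j, 0 < σ j)
    (v : ι → Fin n → K[X]) :
    pseudoKrylov T σ v = T 0 * pseudoKrylov (fun i => T (i + 1)) (fun j => σ j - 1) v := by
  ext i j
  obtain ⟨s, hs⟩ := Nat.exists_eq_add_one.2 (hσ j)
  simp only [pseudoKrylov, mul_apply, of_apply, hs, Nat.add_sub_cancel, List.prod_range_succ',
    ← mulVec_mulVec]
  rfl

variable {ℓ t : ℕ}

theorem denom_det_pseudoKrylov_dvd_of_eq_zero (T : ℕ → Matrix (Fin n) (Fin n) (RatFunc K))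
    {σ : Fin (t + 1) → ℕ} (v : Fin (t + 1) → Fin n → K[X]) (α : Fin (t + 1) → Fin n)
    {j : Fin (t + 1)} (hj : σ j = 0) {d : K[X]}
    (h : ∀ (v' : Fin t → Fin n → K[X]) (α' : Fin t → Fin n),
      ((pseudoKrylov T (σ ∘ j.succAbove) v').submatrix α' id).det.denom ∣ d) :
    ((pseudoKrylov T σ v).submatrix α id).det.denom ∣ d :=
  denom_det_succ_dvd_of_col_eq_algebraMap _ j (fun i => v j (α i))
    (fun i => pseudoKrylov_apply_of_eq_zero T v (α i) hj)
    fun i => h (v ∘ j.succAbove) (α ∘ i.succAbove)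

variable [CharZero K]

theorem denom_det_pseudoKrylov_dvd_of_pos (ht : t ≤ ℓ)
    (T : ℕ → Matrix (Fin n) (Fin n) (RatFunc K))
    {σ : Fin t → ℕ} (hσ : ∀ j, 0 < σ j) (v : Fin t → Fin n → K[X]) (α : Fin t → Fin n)
    {d : K[X]}
    (h : ∀ α' : Fin t → Fin n,
      ((pseudoKrylov (fun i => T (i + 1)) (fun j => σ j - 1) v).submatrix α' id).det.denom ∣ d) :
    ((pseudoKrylov T σ v).submatrix α id).det.denom ∣ detDen (T 0) ℓ * d := by
  rw [pseudoKrylov_eq_mul_of_pos T hσ]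
  change ((T 0).submatrix α id * _).det.denom ∣ _
  exact denom_det_mul_dvd _ _ (fun γ => denom_det_submatrix_dvd_detDen (T 0) ht α γ) fun γ => h γ

theorem denom_det_pseudoKrylov_dvd (ht : t ≤ ℓ) {N : ℕ}
    (T : ℕ → Matrix (Fin n) (Fin n) (RatFunc K))
    (σ : Fin t → ℕ) (hσ : ∀ j, σ j ≤ N) (v : Fin t → Fin n → K[X]) (α : Fin t → Fin n) :
    ((pseudoKrylov T σ v).submatrix α id).det.denom ∣ ∏ i ∈ Finset.range N, detDen (T i) ℓ := by
  induction t generalizing N T with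
  | zero =>
    rw [det_isEmpty, denom_one]
    exact one_dvd _
  | succ t ih =>
    induction N generalizing T σ α with
    | zero =>
      exact denom_det_pseudoKrylov_dvd_of_eq_zero T v α (Nat.le_zero.1 (hσ 0)) fun v' α' =>
        ih (by omega) T _ (fun _ => hσ _) v' α'
    | succ N ihN =>
      by_cases h0 : ∃ j, σ j = 0
      · obtain ⟨j, hj⟩ := h0
        exact denom_det_pseudoKrylov_dvd_of_eq_zero T v α hj fun v' α' =>
          ih (by omega) T _ (fun _ => hσ _) v' α'
      · push Not at h0
        rw [Finset.prod_range_succ', mul_comm]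
        exact denom_det_pseudoKrylov_dvd_of_pos ht T (fun j => Nat.pos_of_ne_zero (h0 j)) v α
          fun α' => ihN (fun i => T (i + 1)) _ (fun j => by have := hσ j; omega) α'

end PseudoKrylov

/-- Determinantal denominators of pseudo-Krylov-type matrices, shift case: with
`T^{(i)} = T_0 ⋯ T_{i−1}` and `s_1 ≤ ⋯ ≤ s_m`, the matrix
`K = [T^{(s_1)} u_1 | ⋯ | T^{(s_m)} u_m]` satisfies
`φ_ℓ(K) ∣ φ_ℓ(T_0) ⋯ φ_ℓ(T_{s_m−1})`. -/
theorem detDen_pseudoKrylov_prod {n m : ℕ}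
    (T : ℕ → Matrix (Fin n) (Fin n) (RatFunc k))
    (s : Fin (m + 1) → ℕ) (hs : Monotone s)
    (u : Fin (m + 1) → Fin n → Polynomial k) (ℓ : ℕ) :
    detDen (Matrix.of fun i j =>
        (((List.range (s j)).map T).prod).mulVec
          (fun t => algebraMap (Polynomial k) (RatFunc k) (u j t)) i) ℓ ∣
      ∏ i ∈ Finset.range (s (Fin.last m)), detDen (T i) ℓ :=
  detDen_dvd_iff.2 fun _ ht α γ =>
    denom_det_pseudoKrylov_dvd ht T (s ∘ γ) (fun _ => hs (Fin.le_last _)) (u ∘ γ) α
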